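/- Let F_{3,3} : ℝ^6 → ℝ^6 be given by F_{3,3}(x,y,u1,u2,u3,u4) = (x³+y³+u1·x+u2·y+u3·x²+u4·y², x·y, u1, u2, u3, u4). Then for every point q = (x,y,u1,u2,u3,u4) ∈ ℝ^6, the derivative of F_{3,3} at q applied to ξ_3(q) = (−(1/3)x²−(1/9)u3·x, (1/3)xy, x³+y³+u1·x+u2·y+u3·x²+u4·y²+(1/9)u1·u3, −(5/3)u4·xy, −(2/3)u1+(2/9)u3², −2xy) equals η_3(F_{3,3}(q)), where η_3(X,Y,U1,U2,U3,U4) = ((4/3)U2·Y, −(1/9)U3·Y, X+(1/9)U1·U3, −(5/3)U4·Y, −(2/3)U1+(2/9)U3², −2Y). In particular η_3 is liftable over F_{3,3}. -/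

import Mathlib

/-- The stable map `F₃₃` of discrete algebra type `B_{3,3}`. -/
noncomputable def F33 : ℝ × ℝ × ℝ × ℝ × ℝ × ℝ → ℝ × ℝ × ℝ × ℝ × ℝ × ℝ :=
  fun (x, y, u1, u2, u3, u4) =>
    (x^3 + y^3 + u1*x + u2*y + u3*x^2 + u4*y^2, x*y, u1, u2, u3, u4)

/-- The vector field `η₃` on the target of `F₃₃`. -/
noncomputable def eta3 : ℝ × ℝ × ℝ × ℝ × ℝ × ℝ → ℝ × ℝ × ℝ × ℝ × ℝ × ℝ :=
  fun (X, Y, U1, U2, U3, U4) =>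
    ((4/3)*U2*Y, -(1/9)*U3*Y, X + (1/9)*U1*U3, -(5/3)*U4*Y,
     -(2/3)*U1 + (2/9)*U3^2, -2*Y)

/-- The lowerable vector field `ξ₃` on the source of `F₃₃`. -/
noncomputable def xi3 : ℝ × ℝ × ℝ × ℝ × ℝ × ℝ → ℝ × ℝ × ℝ × ℝ × ℝ × ℝ :=
  fun (x, y, u1, u2, u3, u4) =>
    (-(1/3)*x^2 - (1/9)*u3*x, (1/3)*x*y,
     x^3 + y^3 + u1*x + u2*y + u3*x^2 + u4*y^2 + (1/9)*u1*u3,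
     -(5/3)*u4*x*y, -(2/3)*u1 + (2/9)*u3^2, -2*x*y)

/-! Since `ξ₃` is explicit, liftability is a polynomial identity: apply the Jacobian of `F₃₃` to
`ξ₃` and compare with `η₃ ∘ F₃₃` coordinatewise. Only the first coordinate is not immediate; there
all cubic and quartic terms cancel and `(4/3)·u2·xy = (4/3)·U2·Y` remains. -/

theorem fderiv_F33_apply (x y u1 u2 u3 u4 a b c1 c2 c3 c4 : ℝ) :
    fderiv ℝ F33 (x, y, u1, u2, u3, u4) (a, b, c1, c2, c3, c4) =
      ((3*x^2 + 2*u3*x + u1)*a + (3*y^2 + 2*u4*y + u2)*b + x*c1 + y*c2 + x^2*c3 + y^2*c4,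
        y*a + x*b, c1, c2, c3, c4) := by
  -- The calculus simp lemmas see through projections, not through the pattern-matching lambda.
  have hF : F33 = fun q => (q.1^3 + q.2.1^3 + q.2.2.1*q.1 + q.2.2.2.1*q.2.1
      + q.2.2.2.2.1*q.1^2 + q.2.2.2.2.2*q.2.1^2, q.1*q.2.1, q.2.2) := rfl
  rw [hF]
  simp (disch := fun_prop) only [DifferentiableAt.fderiv_prodMk, fderiv_fun_add, fderiv_fun_mul,
    fderiv_fun_pow, fderiv.fst, fderiv.snd, fderiv_fun_id, ContinuousLinearMap.comp_id,
    ContinuousLinearMap.prod_apply, add_apply, smul_apply, ContinuousLinearMap.comp_apply,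
    ContinuousLinearMap.coe_fst', ContinuousLinearMap.coe_snd', Nat.add_one_sub_one, pow_one,
    nsmul_eq_mul, Nat.cast_ofNat, smul_eq_mul, Prod.mk.injEq, and_true]
  constructor <;> ring

/-- `η₃` is liftable over `F₃₃` via `ξ₃`:
for every `q`, `d(F₃₃)_q (ξ₃ q) = η₃ (F₃₃ q)`. -/
theorem eta3_liftable_over_F33 :
    ∀ q : ℝ × ℝ × ℝ × ℝ × ℝ × ℝ, fderiv ℝ F33 q (xi3 q) = eta3 (F33 q) := by
  rintro ⟨x, y, u1, u2, u3, u4⟩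
  dsimp only [xi3]
  rw [fderiv_F33_apply]
  ext <;> dsimp only [F33, eta3] <;> ring
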